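/- arXiv:2412.09155 — 3 statements merged into one kernel-verified Lean document; each statement's English description precedes it below -/
import Mathlib

section
/- Define for i = 0,1,2,... and t > 0 the points a_i = ((1/4 + i)π/t)² and b_i = ((3/4 + i)π/t)², and set A_i = ∫_{a_i}^{b_i} e^{-r²}/r dr, B_i = ∫_{b_i}^{a_{i+1}} e^{-r²}/r dr. Then for every i ≥ 0, B_i ≤ (1 + 1/(1+2i)) A_i ≤ 2 A_i. -/
open MeasureTheory Real

theorem area_comparison (t : ℝ) (ht : 0 < t)
    (a b : ℕ → ℝ)
    (ha : ∀ i, a i = ((1/4 + (i:ℝ)) * π / t) ^ 2)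
    (hb : ∀ i, b i = ((3/4 + (i:ℝ)) * π / t) ^ 2) :
    ∀ i : ℕ,
      (∫ r in b i..a (i+1), Real.exp (-r^2) / r) ≤
        (1 + 1/(1 + 2*(i:ℝ))) * ∫ r in a i..b i, Real.exp (-r^2) / r ∧
      (1 + 1/(1 + 2*(i:ℝ))) * (∫ r in a i..b i, Real.exp (-r^2) / r) ≤
        2 * ∫ r in a i..b i, Real.exp (-r^2) / r := by
  have hπ := Real.pi_pos
  have key : ∀ x y : ℝ, 0 < x → x ≤ y →
      Real.exp (-y^2)/y ≤ Real.exp (-x^2)/x := by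
    intro x y hx hxy
    exact div_le_div₀ (Real.exp_pos _).le
      (Real.exp_le_exp.2 (by nlinarith)) hx hxy
  have hint : ∀ u v : ℝ, 0 < u → u ≤ v →
      IntervalIntegrable (fun r => Real.exp (-r^2)/r) volume u v := by
    intro u v hu huv
    apply ContinuousOn.intervalIntegrable
    apply ContinuousOn.div (Continuous.continuousOn (by continuity)) continuousOn_id
    intro x hx
    rw [Set.uIcc_of_le huv] at hx
    exact ne_of_gt (lt_of_lt_of_le hu hx.1)
  intro i
  have hi : (0:ℝ) ≤ (i:ℝ) := Nat.cast_nonneg i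
  have hai : 0 < a i := by rw [ha]; positivity
  have hab : a i < b i := by
    rw [ha, hb]
    gcongr ((?_ : ℝ) * π / t) ^ 2 <;> first | linarith | positivity
  have hbi : 0 < b i := hai.trans hab
  have hba' : b i < a (i+1) := by
    rw [hb, ha]; push_cast
    gcongr ((?_ : ℝ) * π / t) ^ 2 <;> first | linarith | positivity
  set f : ℝ → ℝ := fun r => Real.exp (-r^2)/r with hf
  set c : ℝ := Real.exp (-(b i)^2)/(b i) with hc
  have h1 : (∫ r in b i..a (i+1), f r) ≤ (a (i+1) - b i) * c := by
    have := intervalIntegral.integral_mono_on hba'.le (hint _ _ hbi hba'.le)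
      (intervalIntegrable_const (c := c)) (fun x hx => key (b i) x hbi hx.1)
    rwa [intervalIntegral.integral_const, smul_eq_mul] at this
  have h2 : (b i - a i) * c ≤ ∫ r in a i..(b i), f r := by
    have := intervalIntegral.integral_mono_on hab.le
      (intervalIntegrable_const (c := c)) (hint _ _ hai hab.le)
      (fun x hx => key x (b i) (lt_of_lt_of_le hai hx.1) hx.2)
    rwa [intervalIntegral.integral_const, smul_eq_mul] at this
  have hA0 : 0 ≤ ∫ r in a i..(b i), f r :=
    intervalIntegral.integral_nonneg hab.le
      (fun x hx => div_nonneg (Real.exp_pos _).le (le_trans hai.le hx.1))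
  have h2i : (0:ℝ) < 1 + 2*(i:ℝ) := by linarith
  have hR : (0:ℝ) < 1 + 1/(1 + 2*(i:ℝ)) := by positivity
  have hlen : a (i+1) - b i = (1 + 1/(1 + 2*(i:ℝ))) * (b i - a i) := by
    simp only [ha, hb]; push_cast; field_simp; ring
  constructor
  · calc (∫ r in b i..a (i+1), f r) ≤ (a (i+1) - b i) * c := h1
      _ = (1 + 1/(1 + 2*(i:ℝ))) * ((b i - a i) * c) := by rw [hlen]; ring
      _ ≤ (1 + 1/(1 + 2*(i:ℝ))) * ∫ r in a i..(b i), f r :=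
          mul_le_mul_of_nonneg_left h2 hR.le
  · have : 1/(1 + 2*(i:ℝ)) ≤ 1 := by
      rw [div_le_one h2i]; linarith
    have h2le : (1 + 1/(1 + 2*(i:ℝ))) ≤ 2 := by linarith
    exact mul_le_mul_of_nonneg_right h2le hA0
end

section
/- With a_i = ((1/4 + i)π/t)², b_i = ((3/4 + i)π/t)² for t > 0 and i ≥ 0, it holds that ∫_{a_0}^{∞} e^{-r²}/r dr ≤ 3 · Σ_{i=0}^{∞} ∫_{a_i}^{b_i} e^{-r²}/r dr. -/
open MeasureTheory Real Filter Topology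

theorem summed_area_estimate (t : ℝ) (ht : 0 < t)
    (a b : ℕ → ℝ)
    (ha : ∀ i, a i = ((1/4 + (i:ℝ)) * π / t) ^ 2)
    (hb : ∀ i, b i = ((3/4 + (i:ℝ)) * π / t) ^ 2) :
    (∫ r in Set.Ioi (a 0), Real.exp (-r^2) / r) ≤
      3 * ∑' i : ℕ, ∫ r in a i..b i, Real.exp (-r^2) / r := by
  set f : ℝ → ℝ := fun r => Real.exp (-r^2) / r with hf
  set p : ℝ := π / t with hp
  have hp0 : 0 < p := div_pos pi_pos ht
  have ha' : ∀ i, a i = ((1/4 + (i:ℝ)) * p) ^ 2 := by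
    intro i; rw [ha, hp]; ring
  have hb' : ∀ i, b i = ((3/4 + (i:ℝ)) * p) ^ 2 := by
    intro i; rw [hb, hp]; ring
  have ha0 : 0 < a 0 := by
    rw [ha']; positivity
  have ha0le : ∀ i, a 0 ≤ a i := by
    intro i
    rw [ha' 0, ha' i]
    apply pow_le_pow_left₀ (by positivity)
    have h0 : (0:ℝ) ≤ (i:ℝ) := Nat.cast_nonneg i
    nlinarith
  have hab : ∀ i, a i ≤ b i := by
    intro i
    rw [ha' i, hb' i]
    apply pow_le_pow_left₀ (by positivity)
    nlinarith
  have hba : ∀ i, b i ≤ a (i+1) := by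
    intro i
    rw [hb' i, ha' (i+1)]
    apply pow_le_pow_left₀ (by positivity)
    push_cast
    nlinarith
  have hfpos : ∀ x : ℝ, 0 < x → 0 ≤ f x := fun x hx =>
    div_nonneg (Real.exp_pos _).le hx.le
  have hmono : ∀ x y : ℝ, 0 < x → x ≤ y → f y ≤ f x := by
    intro x y hx hxy
    apply div_le_div₀ (Real.exp_pos _).le _ hx hxy
    exact Real.exp_le_exp.2 (by nlinarith)
  have hInt : IntegrableOn f (Set.Ici (a 0)) := by
    apply Integrable.mono' (g := fun r => Real.exp (-(1:ℝ) * r^2) / a 0)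
    · exact ((integrable_exp_neg_mul_sq one_pos).div_const _).integrableOn
    · exact ((Real.measurable_exp.comp
        ((measurable_id.pow_const 2).neg)).div measurable_id).aestronglyMeasurable
    · refine (ae_restrict_iff' measurableSet_Ici).2 (ae_of_all _ fun x hx => ?_)
      have hx0 : 0 < x := lt_of_lt_of_le ha0 hx
      rw [Real.norm_eq_abs, abs_of_nonneg (hfpos x hx0)]
      simp only [hf, neg_one_mul]
      exact div_le_div₀ (Real.exp_pos _).le le_rfl ha0 hx
  have hII : ∀ x y : ℝ, a 0 ≤ x → a 0 ≤ y → IntervalIntegrable f volume x y := by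
    intro x y hx hy
    apply (hInt.mono_set ?_).intervalIntegrable
    intro z hz
    exact le_trans (le_inf hx hy) hz.1
  have hAnonneg : ∀ i, 0 ≤ ∫ r in a i..b i, f r := fun i =>
    intervalIntegral.integral_nonneg (hab i)
      (fun u hu => hfpos u (lt_of_lt_of_le (lt_of_lt_of_le ha0 (ha0le i)) hu.1))
  have hsplit : ∀ i, (∫ r in a i..a (i+1), f r)
      = (∫ r in a i..b i, f r) + ∫ r in b i..a (i+1), f r := fun i =>
    (intervalIntegral.integral_add_adjacent_intervals
      (hII _ _ (ha0le i) ((ha0le i).trans (hab i)))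
      (hII _ _ ((ha0le i).trans (hab i)) (ha0le (i+1)))).symm
  have hBnonneg : ∀ i, 0 ≤ ∫ r in b i..a (i+1), f r := fun i =>
    intervalIntegral.integral_nonneg (hba i)
      (fun u hu => hfpos u (lt_of_lt_of_le (lt_of_lt_of_le ha0 ((ha0le i).trans (hab i))) hu.1))
  have hkey : ∀ i, (∫ r in a i..a (i+1), f r) ≤ 3 * ∫ r in a i..b i, f r := by
    intro i
    have hb0 : 0 < b i := lt_of_lt_of_le ha0 ((ha0le i).trans (hab i))
    have h1 : (∫ r in b i..a (i+1), f r) ≤ (a (i+1) - b i) * f (b i) := by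
      have h := intervalIntegral.integral_mono_on (hba i)
        (hII _ _ ((ha0le i).trans (hab i)) (ha0le (i+1)))
        (intervalIntegrable_const (c := f (b i)))
        (fun x hx => hmono (b i) x hb0 hx.1)
      rwa [intervalIntegral.integral_const, smul_eq_mul] at h
    have h2 : (b i - a i) * f (b i) ≤ ∫ r in a i..b i, f r := by
      have h := intervalIntegral.integral_mono_on (hab i)
        (intervalIntegrable_const (c := f (b i)))
        (hII _ _ (ha0le i) ((ha0le i).trans (hab i)))
        (fun x hx => hmono x (b i)
          (lt_of_lt_of_le (lt_of_lt_of_le ha0 (ha0le i)) hx.1) hx.2)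
      rwa [intervalIntegral.integral_const, smul_eq_mul] at h
    have h3 : a (i+1) - b i ≤ 2 * (b i - a i) := by
      rw [ha' (i+1), ha' i, hb' i]
      push_cast
      nlinarith [mul_nonneg (sq_nonneg p) (Nat.cast_nonneg i : (0:ℝ) ≤ (i:ℝ))]
    have h4 : 0 ≤ f (b i) := hfpos _ hb0
    rw [hsplit i]
    nlinarith
  have hbound : ∀ N, ∑ i ∈ Finset.range N, (∫ r in a i..b i, f r)
      ≤ ∫ r in Set.Ioi (a 0), f r := by
    intro N
    have hstep : ∑ i ∈ Finset.range N, (∫ r in a i..b i, f r)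
        ≤ ∑ i ∈ Finset.range N, ∫ r in a i..a (i+1), f r := by
      apply Finset.sum_le_sum
      intro i _
      rw [hsplit i]
      linarith [hBnonneg i]
    have heq : ∑ i ∈ Finset.range N, (∫ r in a i..a (i+1), f r)
        = ∫ r in (a 0)..(a N), f r :=
      intervalIntegral.sum_integral_adjacent_intervals
        (fun i _ => hII _ _ (ha0le i) (ha0le (i+1)))
    have hle2 : (∫ r in (a 0)..(a N), f r) ≤ ∫ r in Set.Ioi (a 0), f r := by
      rw [intervalIntegral.integral_of_le (ha0le N)]
      apply setIntegral_mono_set (hInt.mono_set Set.Ioi_subset_Ici_self)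
      · exact (ae_restrict_iff' measurableSet_Ioi).2
          (ae_of_all _ fun x hx => hfpos x (ha0.trans hx))
      · exact (Set.Ioc_subset_Ioi_self).eventuallyLE
    linarith [heq ▸ hstep]
  have hsummable : Summable (fun i => ∫ r in a i..b i, f r) :=
    summable_of_sum_range_le hAnonneg hbound
  have hatop : Filter.Tendsto a Filter.atTop Filter.atTop := by
    apply tendsto_atTop_mono (fun i => ?_)
      (Filter.Tendsto.atTop_mul_const (by positivity : (0:ℝ) < p^2)
        tendsto_natCast_atTop_atTop)
    rw [ha' i]
    nlinarith [mul_nonneg (sq_nonneg ((i:ℝ) - 1/4)) (sq_nonneg p)]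
  have htend : Filter.Tendsto (fun N => ∫ r in (a 0)..(a N), f r) Filter.atTop
      (𝓝 (∫ r in Set.Ioi (a 0), f r)) :=
    intervalIntegral_tendsto_integral_Ioi _ (hInt.mono_set Set.Ioi_subset_Ici_self) hatop
  have hN : ∀ N, (∫ r in (a 0)..(a N), f r) ≤ 3 * ∑' i, ∫ r in a i..b i, f r := by
    intro N
    rw [← intervalIntegral.sum_integral_adjacent_intervals
      (fun i _ => hII _ _ (ha0le i) (ha0le (i+1)))]
    calc ∑ i ∈ Finset.range N, (∫ r in a i..a (i+1), f r)
        ≤ ∑ i ∈ Finset.range N, 3 * ∫ r in a i..b i, f r :=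
          Finset.sum_le_sum fun i _ => hkey i
      _ = 3 * ∑ i ∈ Finset.range N, ∫ r in a i..b i, f r := by rw [Finset.mul_sum]
      _ ≤ 3 * ∑' i, ∫ r in a i..b i, f r := by
          have := Summable.sum_le_tsum (Finset.range N) (fun i _ => hAnonneg i) hsummable
          linarith
  exact le_of_tendsto htend (Filter.Eventually.of_forall hN)
end

section
/- Let n = 1, s = 1/2, and u₁ ∈ L¹(ℝ) ∩ L²(ℝ), u₀ ∈ L²(ℝ). Define û(t,ξ) = (sin(t|ξ|^{1/2})/|ξ|^{1/2})û₁(ξ) + cos(t|ξ|^{1/2})û₀(ξ). Then there exists T > 1 such that for all t ≥ T, ∫_ℝ |û(t,ξ)|² dξ ≤ 4(‖û₀‖₂² + ‖û₁‖₂² + ‖u₁‖₁²) log t. -/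
/-!
The multiplier `m = sin (t |ξ|^{1/2}) / |ξ|^{1/2}` satisfies `m² ≤ min (t², |ξ|⁻¹)`. With
`L = log t`, the weighted inequality `(a + b)² ≤ (1 + L⁻¹) a² + (1 + L) b²` separates the two data.
For `|ξ| ≤ L⁻¹` we use `|û₁| ≤ ‖u₁‖₁`, and `min (t², |ξ|⁻¹)` integrates over `|ξ| ≤ L⁻¹` to
`2 (1 + 2 log t - log L)`; for `|ξ| > L⁻¹` we use `m² ≤ L`. The constant `4` wins once `log L ≥ 3`.

The `L²` bound `‖û₁‖₂² ≤ 2π ‖u₁‖₂²` comes from damping by `e^{-εξ²}`: Fubini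
turns `∫ |û₁|² e^{-εξ²}` into `∬ ū₁(x) u₁(y) k_ε(x - y)` for a positive Gaussian kernel of mass
`2π`, which Schur's test bounds by `2π ‖u₁‖₂²`; then let `ε → 0` with Fatou's lemma.
-/

open MeasureTheory Real Set
open Complex (I)
open ComplexConjugate

section Convolution

variable {G : Type*} [AddCommGroup G] [MeasurableSpace G] [MeasurableAdd₂ G] [MeasurableNeg G]
  {μ : Measure G} [SFinite μ] [μ.IsAddLeftInvariant] {f k : G → ℝ}

lemma integrable_prod_mul_sub (hf : Integrable f μ) (hk : Integrable k μ) :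
    Integrable (fun p : G × G ↦ f p.2 * k (p.1 - p.2)) (μ.prod μ) :=
  hf.convolution_integrand (ContinuousLinearMap.mul ℝ ℝ) hk

lemma integral_prod_mul_sub (hf : Integrable f μ) (hk : Integrable k μ) :
    ∫ p, f p.2 * k (p.1 - p.2) ∂(μ.prod μ) = (∫ x, f x ∂μ) * ∫ z, k z ∂μ := by
  rw [integral_prod _ (integrable_prod_mul_sub hf hk)]
  exact integral_convolution (ContinuousLinearMap.mul ℝ ℝ) hf hk

lemma integrable_prod_mul_sub' [μ.IsNegInvariant] (hf : Integrable f μ) (hk : Integrable k μ) :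
    Integrable (fun p : G × G ↦ f p.1 * k (p.1 - p.2)) (μ.prod μ) := by
  simpa [Function.comp_def] using (integrable_prod_mul_sub hf hk.comp_neg).swap

lemma integral_prod_mul_sub' [μ.IsNegInvariant] (hf : Integrable f μ) (hk : Integrable k μ) :
    ∫ p, f p.1 * k (p.1 - p.2) ∂(μ.prod μ) = (∫ x, f x ∂μ) * ∫ z, k z ∂μ := by
  rw [← integral_neg_eq_self k, ← integral_prod_mul_sub hf hk.comp_neg, ← integral_prod_swap]
  simp

lemma integral_norm_mul_norm_mul_sub_le [μ.IsNegInvariant] {E : Type*} [NormedAddCommGroup E]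
    {u : G → E} (hu : MemLp u 2 μ) (hk0 : ∀ z, 0 ≤ k z) (hk : Integrable k μ) :
    ∫ p, ‖u p.1‖ * ‖u p.2‖ * k (p.1 - p.2) ∂(μ.prod μ) ≤
      (∫ z, k z ∂μ) * ∫ x, ‖u x‖ ^ 2 ∂μ := by
  have hu2 : Integrable (fun x ↦ ‖u x‖ ^ 2) μ := hu.integrable_norm_pow two_ne_zero
  have h₁ := integrable_prod_mul_sub' hu2 hk
  have h₂ := integrable_prod_mul_sub hu2 hk
  calc ∫ p, ‖u p.1‖ * ‖u p.2‖ * k (p.1 - p.2) ∂(μ.prod μ)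
      ≤ ∫ p, (‖u p.1‖ ^ 2 * k (p.1 - p.2) + ‖u p.2‖ ^ 2 * k (p.1 - p.2)) / 2 ∂(μ.prod μ) := by
        refine integral_mono_of_nonneg (.of_forall fun p ↦ ?_) ((h₁.add h₂).div_const 2)
          (.of_forall fun p ↦ ?_)
        · have := hk0 (p.1 - p.2); positivity
        · nlinarith [two_mul_le_add_sq ‖u p.1‖ ‖u p.2‖, hk0 (p.1 - p.2)]
    _ = (∫ z, k z ∂μ) * ∫ x, ‖u x‖ ^ 2 ∂μ := by
        rw [integral_div, integral_add h₁ h₂, integral_prod_mul_sub' hu2 hk,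
          integral_prod_mul_sub hu2 hk]
        ring

end Convolution

/-- The Fourier transform in the convention `û(ξ) = ∫ e^{-ixξ} u(x) dx` (Mathlib's `𝓕` uses
`e^{-2πixξ}`). -/
noncomputable def angularFourier (u : ℝ → ℂ) (ξ : ℝ) : ℂ :=
  ∫ x : ℝ, Complex.exp (-I * x * ξ) * u x

lemma norm_cexp_neg_I_mul_mul (x ξ : ℝ) : ‖Complex.exp (-I * x * ξ)‖ = 1 := by
  rw [show -I * x * ξ = ((-(x * ξ) : ℝ) : ℂ) * I by push_cast; ring]
  exact Complex.norm_exp_ofReal_mul_I _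

lemma norm_angularFourier_le (u : ℝ → ℂ) (ξ : ℝ) : ‖angularFourier u ξ‖ ≤ ∫ x, ‖u x‖ :=
  (norm_integral_le_integral_norm _).trans_eq <| by
    simp only [norm_mul, norm_cexp_neg_I_mul_mul, one_mul]

lemma continuous_angularFourier {u : ℝ → ℂ} (hu : Integrable u) :
    Continuous (angularFourier u) :=
  continuous_of_dominated (bound := fun x ↦ ‖u x‖)
    (fun ξ ↦ (by fun_prop : Continuous _).aestronglyMeasurable.mul hu.aestronglyMeasurable)
    (fun ξ ↦ .of_forall fun x ↦ by rw [norm_mul, norm_cexp_neg_I_mul_mul, one_mul]) hu.norm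
    (.of_forall fun x ↦ by fun_prop)

lemma conj_angularFourier (u : ℝ → ℂ) (ξ : ℝ) :
    conj (angularFourier u ξ) = ∫ x : ℝ, Complex.exp (I * x * ξ) * conj (u x) := by
  rw [angularFourier, ← integral_conj]
  congr 1 with x
  simp [← Complex.exp_conj]

noncomputable def gaussKernel (ε z : ℝ) : ℝ := √(π / ε) * rexp (-(4 * ε)⁻¹ * z ^ 2)

lemma gaussKernel_nonneg (ε z : ℝ) : 0 ≤ gaussKernel ε z := by
  unfold gaussKernel; positivity

lemma integrable_gaussKernel {ε : ℝ} (hε : 0 < ε) : Integrable (gaussKernel ε) :=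
  (integrable_exp_neg_mul_sq (by positivity)).const_mul _

lemma integral_gaussKernel {ε : ℝ} (hε : 0 < ε) : ∫ z, gaussKernel ε z = 2 * π := by
  simp only [gaussKernel]
  rw [integral_const_mul, integral_gaussian, ← sqrt_mul (by positivity),
    show π / ε * (π / (4 * ε)⁻¹) = (2 * π) ^ 2 by field_simp; ring, sqrt_sq (by positivity)]

lemma integral_cexp_I_mul_mul_gaussian {ε : ℝ} (hε : 0 < ε) (z : ℝ) :
    ∫ ξ : ℝ, Complex.exp (I * z * ξ) * Complex.exp (-ε * ξ ^ 2) = gaussKernel ε z := by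
  rw [fourierIntegral_gaussian (by simpa using hε), gaussKernel, sqrt_eq_rpow,
    Complex.ofReal_mul, Complex.ofReal_cpow (by positivity), Complex.ofReal_exp]
  push_cast
  congr 2
  field_simp

lemma norm_sq_angularFourier (u : ℝ → ℂ) (ξ : ℝ) :
    ((‖angularFourier u ξ‖ ^ 2 : ℝ) : ℂ) =
      ∫ p : ℝ × ℝ, Complex.exp (I * (p.1 - p.2) * ξ) * (conj (u p.1) * u p.2) := by
  rw [Complex.ofReal_pow, ← Complex.conj_mul', conj_angularFourier, angularFourier,
    ← integral_prod_mul, ← Measure.volume_eq_prod]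
  congr 1 with p
  rw [mul_sub, sub_mul, sub_eq_add_neg, Complex.exp_add]
  ring_nf

lemma integrable_gaussian_mul_cexp_mul_conj_mul {u : ℝ → ℂ} (hu : Integrable u) {ε : ℝ}
    (hε : 0 < ε) :
    Integrable (fun q : ℝ × (ℝ × ℝ) ↦ Complex.exp (-ε * q.1 ^ 2) *
      (Complex.exp (I * (q.2.1 - q.2.2) * q.1) * (conj (u q.2.1) * u q.2.2))) := by
  have hbound : Integrable fun q : ℝ × (ℝ × ℝ) ↦
      rexp (-ε * q.1 ^ 2) * (‖u q.2.1‖ * ‖u q.2.2‖) := by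
    rw [Measure.volume_eq_prod, Measure.volume_eq_prod]
    exact (integrable_exp_neg_mul_sq hε).mul_prod (hu.norm.mul_prod hu.norm)
  refine hbound.mono' ?_ (.of_forall fun q ↦ ?_)
  · rw [Measure.volume_eq_prod, Measure.volume_eq_prod]
    refine (Continuous.aestronglyMeasurable (by fun_prop)).mul ?_
    exact (Continuous.aestronglyMeasurable (by fun_prop)).mul
      ((hu.1.star.comp_fst.comp_snd).mul (hu.1.comp_snd.comp_snd))
  · simp [Complex.norm_exp, Complex.mul_re, ← Complex.ofReal_pow]

lemma integral_norm_sq_angularFourier_mul_gaussian_eq {u : ℝ → ℂ} (hu : Integrable u) {ε : ℝ}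
    (hε : 0 < ε) :
    ((∫ ξ, ‖angularFourier u ξ‖ ^ 2 * rexp (-ε * ξ ^ 2) : ℝ) : ℂ) =
      ∫ p : ℝ × ℝ, conj (u p.1) * u p.2 * gaussKernel ε (p.1 - p.2) := by
  have hF := integrable_gaussian_mul_cexp_mul_conj_mul hu hε
  rw [Measure.volume_eq_prod] at hF
  calc ((∫ ξ, ‖angularFourier u ξ‖ ^ 2 * rexp (-ε * ξ ^ 2) : ℝ) : ℂ)
      = ∫ ξ : ℝ, ∫ p : ℝ × ℝ, Complex.exp (-ε * ξ ^ 2) *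
          (Complex.exp (I * (p.1 - p.2) * ξ) * (conj (u p.1) * u p.2)) := by
        rw [← integral_complex_ofReal]
        congr 1 with ξ
        rw [integral_const_mul, ← norm_sq_angularFourier, Complex.ofReal_mul, mul_comm,
          Complex.ofReal_exp]
        push_cast
        rfl
    _ = ∫ p : ℝ × ℝ, ∫ ξ : ℝ, Complex.exp (-ε * ξ ^ 2) *
          (Complex.exp (I * (p.1 - p.2) * ξ) * (conj (u p.1) * u p.2)) :=
        integral_integral_swap hF
    _ = ∫ p : ℝ × ℝ, conj (u p.1) * u p.2 * gaussKernel ε (p.1 - p.2) := by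
        congr 1 with p
        simp_rw [← integral_cexp_I_mul_mul_gaussian hε, ← integral_const_mul]
        push_cast
        congr 1 with ξ
        ring

lemma integral_norm_sq_angularFourier_mul_gaussian_le {u : ℝ → ℂ} (hu : Integrable u)
    (hu2 : MemLp u 2) {ε : ℝ} (hε : 0 < ε) :
    ∫ ξ, ‖angularFourier u ξ‖ ^ 2 * rexp (-ε * ξ ^ 2) ≤ 2 * π * ∫ x, ‖u x‖ ^ 2 := by
  calc ∫ ξ, ‖angularFourier u ξ‖ ^ 2 * rexp (-ε * ξ ^ 2)
      ≤ ‖∫ p : ℝ × ℝ, conj (u p.1) * u p.2 * gaussKernel ε (p.1 - p.2)‖ := by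
        rw [← integral_norm_sq_angularFourier_mul_gaussian_eq hu hε, Complex.norm_real]
        exact le_abs_self _
    _ ≤ ∫ p : ℝ × ℝ, ‖u p.1‖ * ‖u p.2‖ * gaussKernel ε (p.1 - p.2) := by
        refine (norm_integral_le_integral_norm _).trans_eq
          (integral_congr_ae (.of_forall fun p ↦ ?_))
        simp [abs_of_nonneg (gaussKernel_nonneg ε _)]
    _ ≤ 2 * π * ∫ x, ‖u x‖ ^ 2 := by
        simpa only [integral_gaussKernel hε, ← Measure.volume_eq_prod] using
          integral_norm_mul_norm_mul_sub_le hu2 (gaussKernel_nonneg ε) (integrable_gaussKernel hε)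

lemma integrable_norm_sq_angularFourier {u : ℝ → ℂ} (hu : Integrable u) (hu2 : MemLp u 2) :
    Integrable (fun ξ ↦ ‖angularFourier u ξ‖ ^ 2) := by
  set G : ℕ → ℝ → ℝ := fun n ξ ↦ ‖angularFourier u ξ‖ ^ 2 * rexp (-(n + 1 : ℝ)⁻¹ * ξ ^ 2)
  have hcont : ∀ n, Continuous (G n) := fun n ↦
    ((continuous_angularFourier hu).norm.pow 2).mul (by fun_prop)
  have hG : ∀ n, Integrable (G n) := fun n ↦ by
    refine ((integrable_exp_neg_mul_sq (b := (n + 1 : ℝ)⁻¹) (by positivity)).const_mul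
      ((∫ x, ‖u x‖) ^ 2)).mono' (hcont n).aestronglyMeasurable (.of_forall fun ξ ↦ ?_)
    rw [Real.norm_of_nonneg (by positivity)]
    dsimp only [G]
    gcongr
    exact norm_angularFourier_le u ξ
  refine integrable_of_tendsto (G := G) (.of_forall fun ξ ↦ ?_)
    (fun n ↦ (hcont n).aestronglyMeasurable) ?_
  · have : Filter.Tendsto (fun n : ℕ ↦ -(n + 1 : ℝ)⁻¹ * ξ ^ 2) Filter.atTop (nhds 0) := by
      simpa using (tendsto_one_div_add_atTop_nhds_zero_nat.neg.mul_const (ξ ^ 2))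
    simpa [G] using ((continuous_exp.tendsto 0).comp this).const_mul (‖angularFourier u ξ‖ ^ 2)
  · refine ne_top_of_le_ne_top (ENNReal.ofReal_ne_top (r := 2 * π * ∫ x, ‖u x‖ ^ 2))
      (Filter.liminf_le_of_frequently_le' (.of_forall fun n ↦ ?_))
    rw [← ofReal_integral_norm_eq_lintegral_enorm (hG n)]
    exact ENNReal.ofReal_le_ofReal ((integral_congr_ae (.of_forall fun ξ ↦
      Real.norm_of_nonneg (by positivity))).trans_le
      (integral_norm_sq_angularFourier_mul_gaussian_le hu hu2 (by positivity)))

noncomputable def cutoffWeight (c b ξ : ℝ) : ℝ := (Iic b).indicator (fun r ↦ min c r⁻¹) |ξ|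

lemma cutoffWeight_nonneg {c : ℝ} (hc : 0 ≤ c) (b ξ : ℝ) : 0 ≤ cutoffWeight c b ξ := by
  rw [cutoffWeight, indicator_apply]
  split_ifs
  exacts [le_min hc (inv_nonneg.2 (abs_nonneg ξ)), le_rfl]

lemma integrable_cutoffWeight {c : ℝ} (hc : 0 ≤ c) (b : ℝ) : Integrable (cutoffWeight c b) := by
  have hmeas : Measurable (cutoffWeight c b) :=
    ((measurable_const.min measurable_inv).indicator measurableSet_Iic).comp measurable_abs
  refine ((integrable_indicator_iff (measurableSet_Icc (a := -b) (b := b))).2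
    (integrableOn_const (C := c) measure_Icc_lt_top.ne)).mono' hmeas.aestronglyMeasurable
    (.of_forall fun ξ ↦ ?_)
  rw [Real.norm_of_nonneg (cutoffWeight_nonneg hc b ξ), cutoffWeight]
  by_cases hξ : |ξ| ≤ b
  · rw [indicator_of_mem (mem_Iic.2 hξ), indicator_of_mem (mem_Icc.2 (abs_le.1 hξ))]
    exact min_le_left _ _
  · rw [indicator_of_notMem (by simpa using hξ)]
    exact indicator_nonneg (fun _ _ ↦ hc) ξ

lemma integral_cutoffWeight {c b : ℝ} (hc : 0 < c) (hb : c⁻¹ ≤ b) :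
    ∫ ξ, cutoffWeight c b ξ = 2 * (1 + log (c * b)) := by
  have hc' : 0 < c⁻¹ := inv_pos.2 hc
  have hlow : ∫ r in Ioc 0 c⁻¹, min c r⁻¹ = 1 := by
    rw [setIntegral_congr_fun measurableSet_Ioc (g := fun _ ↦ c)
      fun r hr ↦ min_eq_left ((le_inv_comm₀ hc hr.1).2 hr.2),
      setIntegral_const, volume_real_Ioc_of_le hc'.le, smul_eq_mul, sub_zero,
      inv_mul_cancel₀ hc.ne']
  have hhigh : ∫ r in Ioc c⁻¹ b, min c r⁻¹ = log (c * b) := by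
    rw [setIntegral_congr_fun measurableSet_Ioc (g := fun r ↦ r⁻¹)
      fun r hr ↦ min_eq_right ((inv_le_comm₀ (hc'.trans hr.1) hc).2 hr.1.le),
      ← intervalIntegral.integral_of_le hb, integral_inv_of_pos hc' (hc'.trans_le hb),
      div_inv_eq_mul, mul_comm]
  have hint : IntegrableOn (fun r ↦ min c r⁻¹) (Ioc 0 b) :=
    IntegrableOn.of_bound (by simp) (measurable_const.min measurable_inv).aestronglyMeasurable c
      ((ae_restrict_mem measurableSet_Ioc).mono fun r hr ↦ by
        rw [Real.norm_of_nonneg (le_min hc.le (inv_nonneg.2 hr.1.le))]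
        exact min_le_left _ _)
  simp only [cutoffWeight]
  rw [integral_comp_abs (f := (Iic b).indicator _), setIntegral_indicator measurableSet_Iic,
    Ioi_inter_Iic, ← Ioc_union_Ioc_eq_Ioc hc'.le hb,
    setIntegral_union (Ioc_disjoint_Ioc_of_le le_rfl) measurableSet_Ioc
      (hint.mono_set (Ioc_subset_Ioc_right hb)) (hint.mono_set (Ioc_subset_Ioc_left hc'.le)),
    hlow, hhigh]

lemma sq_sin_mul_div_le_sq (t r : ℝ) : (sin (t * r) / r) ^ 2 ≤ t ^ 2 := by
  rcases eq_or_ne r 0 with rfl | hr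
  · simpa using sq_nonneg t
  rw [div_pow, div_le_iff₀ (by positivity), ← mul_pow, ← sq_abs, ← sq_abs (t * r)]
  exact pow_le_pow_left₀ (abs_nonneg _) abs_sin_le_abs 2

lemma sq_sin_div_le_inv_sq (x r : ℝ) : (sin x / r) ^ 2 ≤ (r ^ 2)⁻¹ := by
  rw [div_pow, div_eq_mul_inv]
  exact mul_le_of_le_one_left (by positivity) (sin_sq_le_one x)

lemma add_sq_le_one_add_inv_mul_sq_add {L : ℝ} (hL : 0 < L) (x y : ℝ) :
    (x + y) ^ 2 ≤ (1 + L⁻¹) * x ^ 2 + (1 + L) * y ^ 2 := by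
  have : 0 ≤ L⁻¹ * (x - L * y) ^ 2 := by positivity
  have hL' : L⁻¹ * L = 1 := inv_mul_cancel₀ hL.ne'
  nlinarith

/-- `û(t, ·)` for the solution of `∂ₜ²u + (-Δ)^{1/2} u = 0`, `û(0) = v₀`, `∂ₜû(0) = v₁`. -/
noncomputable def waveFourier (t : ℝ) (v₀ v₁ : ℝ → ℂ) (ξ : ℝ) : ℂ :=
  ((sin (t * |ξ| ^ (1/2 : ℝ)) / |ξ| ^ (1/2 : ℝ) : ℝ) : ℂ) * v₁ ξ +
    ((cos (t * |ξ| ^ (1/2 : ℝ)) : ℝ) : ℂ) * v₀ ξ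

lemma norm_sq_waveFourier_le {v₀ v₁ : ℝ → ℂ} {M : ℝ} (hM : ∀ ξ, ‖v₁ ξ‖ ≤ M) (t : ℝ) {L : ℝ}
    (hL : 0 < L) (ξ : ℝ) :
    ‖waveFourier t v₀ v₁ ξ‖ ^ 2 ≤
      (1 + L⁻¹) * (M ^ 2 * cutoffWeight (t ^ 2) L⁻¹ ξ + L * ‖v₁ ξ‖ ^ 2) +
        (1 + L) * ‖v₀ ξ‖ ^ 2 := by
  set m := sin (t * |ξ| ^ (1/2 : ℝ)) / |ξ| ^ (1/2 : ℝ)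
  have hm : m ^ 2 ≤ |ξ|⁻¹ := by
    have hsq : (|ξ| ^ (1/2 : ℝ)) ^ 2 = |ξ| := by rw [← sqrt_eq_rpow, sq_sqrt (abs_nonneg ξ)]
    simpa only [hsq] using sq_sin_div_le_inv_sq (t * |ξ| ^ (1/2 : ℝ)) (|ξ| ^ (1/2 : ℝ))
  have hv₁ : m ^ 2 * ‖v₁ ξ‖ ^ 2 ≤ M ^ 2 * cutoffWeight (t ^ 2) L⁻¹ ξ + L * ‖v₁ ξ‖ ^ 2 := by
    have hW := cutoffWeight_nonneg (sq_nonneg t) L⁻¹ ξ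
    by_cases hξ : |ξ| ≤ L⁻¹
    · have : m ^ 2 ≤ cutoffWeight (t ^ 2) L⁻¹ ξ := by
        rw [cutoffWeight, indicator_of_mem (mem_Iic.2 hξ)]
        exact le_min (sq_sin_mul_div_le_sq t _) hm
      have := pow_le_pow_left₀ (norm_nonneg _) (hM ξ) 2
      nlinarith [sq_nonneg m, sq_nonneg ‖v₁ ξ‖]
    · have hξL := not_le.1 hξ
      have : m ^ 2 ≤ L := hm.trans ((inv_le_comm₀ ((inv_pos.2 hL).trans hξL) hL).2 hξL.le)
      have := mul_le_mul_of_nonneg_right this (sq_nonneg ‖v₁ ξ‖)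
      nlinarith [sq_nonneg M]
  have hw : ‖waveFourier t v₀ v₁ ξ‖ ≤ |m| * ‖v₁ ξ‖ + ‖v₀ ξ‖ := by
    refine (norm_add_le _ _).trans ?_
    rw [norm_mul, norm_mul, Complex.norm_real, Complex.norm_real, norm_eq_abs, norm_eq_abs]
    gcongr
    exact mul_le_of_le_one_left (norm_nonneg _) (abs_cos_le_one _)
  calc ‖waveFourier t v₀ v₁ ξ‖ ^ 2 ≤ (|m| * ‖v₁ ξ‖ + ‖v₀ ξ‖) ^ 2 :=
        pow_le_pow_left₀ (norm_nonneg _) hw 2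
    _ ≤ (1 + L⁻¹) * (m ^ 2 * ‖v₁ ξ‖ ^ 2) + (1 + L) * ‖v₀ ξ‖ ^ 2 := by
        simpa [mul_pow] using add_sq_le_one_add_inv_mul_sq_add hL (|m| * ‖v₁ ξ‖) ‖v₀ ξ‖
    _ ≤ _ := by gcongr

lemma integral_norm_sq_waveFourier_le {u₁ : ℝ → ℂ} (hu₁ : Integrable u₁) (hu₁2 : MemLp u₁ 2)
    {v₀ : ℝ → ℂ} (hv₀ : MemLp v₀ 2) {t L : ℝ} (hL : 0 < L) (hLt : L ≤ t ^ 2) :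
    ∫ ξ, ‖waveFourier t v₀ (angularFourier u₁) ξ‖ ^ 2 ≤
      (1 + L⁻¹) * ((∫ x, ‖u₁ x‖) ^ 2 * (2 * (1 + log (t ^ 2 * L⁻¹))) +
        L * ∫ ξ, ‖angularFourier u₁ ξ‖ ^ 2) + (1 + L) * ∫ ξ, ‖v₀ ξ‖ ^ 2 := by
  set M := ∫ x, ‖u₁ x‖
  have hW := integrable_cutoffWeight (sq_nonneg t) L⁻¹
  have hlow : Integrable fun ξ ↦ M ^ 2 * cutoffWeight (t ^ 2) L⁻¹ ξ := hW.const_mul _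
  have hhigh : Integrable fun ξ ↦ L * ‖angularFourier u₁ ξ‖ ^ 2 :=
    (integrable_norm_sq_angularFourier hu₁ hu₁2).const_mul _
  have hu₁' : Integrable fun ξ ↦ (1 + L⁻¹) * (M ^ 2 * cutoffWeight (t ^ 2) L⁻¹ ξ +
      L * ‖angularFourier u₁ ξ‖ ^ 2) := (hlow.add hhigh).const_mul _
  have hv₀' : Integrable fun ξ ↦ (1 + L) * ‖v₀ ξ‖ ^ 2 :=
    (hv₀.integrable_norm_pow two_ne_zero).const_mul _
  calc ∫ ξ, ‖waveFourier t v₀ (angularFourier u₁) ξ‖ ^ 2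
      ≤ ∫ ξ, (1 + L⁻¹) * (M ^ 2 * cutoffWeight (t ^ 2) L⁻¹ ξ +
          L * ‖angularFourier u₁ ξ‖ ^ 2) + (1 + L) * ‖v₀ ξ‖ ^ 2 :=
        integral_mono_of_nonneg (.of_forall fun ξ ↦ by positivity)
          (hu₁'.add hv₀') (.of_forall (norm_sq_waveFourier_le (norm_angularFourier_le u₁) t hL))
    _ = _ := by
        rw [integral_add hu₁' hv₀', integral_const_mul, integral_add hlow hhigh,
          integral_const_mul, integral_const_mul, integral_const_mul,
          integral_cutoffWeight (hL.trans_le hLt)]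
        rwa [inv_le_inv₀ (hL.trans_le hLt) hL]

lemma split_coefficients_le {L A B C : ℝ} (hL : 1 ≤ L) (hlogL : 3 ≤ log L) (hA : 0 ≤ A)
    (hB : 0 ≤ B) (hC : 0 ≤ C) :
    (1 + L⁻¹) * (C * (2 * (1 + (2 * L - log L))) + L * B) + (1 + L) * A ≤
      4 * (A + B + C) * L := by
  have hcoeff : (1 + L⁻¹) * (2 * (1 + (2 * L - log L))) ≤ 4 * L := by
    have : 4 * L - (1 + L⁻¹) * (2 * (1 + (2 * L - log L))) =
        2 * ((L + 1) * log L - 3 * L - 1) / L := by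
      field_simp
      ring
    rw [← sub_nonneg, this]
    exact div_nonneg (by nlinarith) (by linarith)
  have hLinv : (1 + L⁻¹) * L = L + 1 := by field_simp
  nlinarith [mul_le_mul_of_nonneg_left hcoeff hC]

theorem upper_bound_critical
    (u₁ : ℝ → ℂ) (hu₁ : Integrable u₁) (hu₁2 : MemLp u₁ 2)
    (u0hat : ℝ → ℂ) (hu0 : MemLp u0hat 2)
    (u1hat : ℝ → ℂ)
    (hu1hat : ∀ ξ, u1hat ξ = ∫ x : ℝ, Complex.exp (-Complex.I * x * ξ) * u₁ x)
    (uhat : ℝ → ℝ → ℂ)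
    (huhat : ∀ t ξ, uhat t ξ =
      ((Real.sin (t * |ξ| ^ (1/2 : ℝ)) / |ξ| ^ (1/2 : ℝ) : ℝ) : ℂ) * u1hat ξ +
      ((Real.cos (t * |ξ| ^ (1/2 : ℝ)) : ℝ) : ℂ) * u0hat ξ) :
    ∃ T > 1, ∀ t ≥ T,
      (∫ ξ : ℝ, ‖uhat t ξ‖ ^ 2) ≤
        4 * ((∫ ξ : ℝ, ‖u0hat ξ‖ ^ 2) + (∫ ξ : ℝ, ‖u1hat ξ‖ ^ 2) +
          (∫ x : ℝ, ‖u₁ x‖) ^ 2) * Real.log t := by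
  obtain rfl : u1hat = angularFourier u₁ := funext hu1hat
  obtain rfl : uhat = fun t ↦ waveFourier t u0hat (angularFourier u₁) :=
    funext fun t ↦ funext (huhat t)
  have hT : 1 < exp (exp 3) := one_lt_exp_iff.2 (exp_pos 3)
  refine ⟨exp (exp 3), hT, fun t ht ↦ ?_⟩
  have ht0 : 0 < t := by linarith
  have hL : exp 3 ≤ log t := by rwa [le_log_iff_exp_le ht0]
  have hlogL : 3 ≤ log (log t) := by rwa [le_log_iff_exp_le ((exp_pos 3).trans_le hL)]
  have hL1 : 1 ≤ log t := by linarith [add_one_le_exp 3]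
  have hLt : log t ≤ t ^ 2 := by nlinarith [log_le_sub_one_of_pos ht0]
  have hlog : log (t ^ 2 * (log t)⁻¹) = 2 * log t - log (log t) := by
    rw [log_mul (by positivity) (by positivity), log_pow, log_inv]
    push_cast
    ring
  calc _ ≤ _ := integral_norm_sq_waveFourier_le hu₁ hu₁2 hu0 (by linarith) hLt
    _ ≤ _ := by
      rw [hlog]
      exact split_coefficients_le hL1 hlogL (integral_nonneg fun _ ↦ by positivity)
        (integral_nonneg fun _ ↦ by positivity) (sq_nonneg _)
end
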